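/- Let (X,d) be a proper geodesic metric space which is δ-hyperbolic for some δ ≥ 0, and let f : X → X be a non-expanding map. Let x ∈ X and suppose d(x, f^n(x))/n → c with c > 0. Then: (1) for all n,m ≥ 0, c·|n−m| ≤ d(f^n(x), f^m(x)) ≤ d(x,f(x))·|n−m|, so the forward orbit (f^n(x)) is a discrete quasi-geodesic ray; (2) there exist a geodesic ray σ : [0,∞) → X and R > 0 such that for every n ≥ 0 there is t ≥ 0 with d(f^n(x), σ(t)) < R, i.e. the forward orbit is contained in a geodesic region. -/

import Mathlib

open Filter Metric Topology

/-- A geodesic ray: `d(γ s, γ t) = |s - t|` for all `s, t ≥ 0`. -/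
def IsGeodesicRay {X : Type*} [MetricSpace X] (γ : ℝ → X) : Prop :=
  ∀ s t : ℝ, 0 ≤ s → 0 ≤ t → dist (γ s) (γ t) = |s - t|

/-- A geodesic metric space: any two points are joined by a geodesic segment. -/
def IsGeodesicSpace (X : Type*) [MetricSpace X] : Prop :=
  ∀ x y : X, ∃ γ : ℝ → X, γ 0 = x ∧ γ (dist x y) = y ∧
    ∀ s ∈ Set.Icc (0 : ℝ) (dist x y), ∀ t ∈ Set.Icc (0 : ℝ) (dist x y),
      dist (γ s) (γ t) = |s - t|

/-- The Gromov product `(x|y)_p = (d(x,p) + d(y,p) - d(x,y))/2`. -/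
noncomputable def gromovProduct {X : Type*} [MetricSpace X] (p x y : X) : ℝ :=
  (dist x p + dist y p - dist x y) / 2

/-- `δ`-hyperbolicity: `(x|y)_p ≥ min((x|z)_p, (z|y)_p) - δ` for all `x, y, z, p`. -/
def IsDeltaHyperbolic (X : Type*) [MetricSpace X] (δ : ℝ) : Prop :=
  ∀ p x y z : X, min (gromovProduct p x z) (gromovProduct p z y) - δ ≤ gromovProduct p x y

/-- Two geodesic rays are strongly asymptotic if `d(γ(t+T), σ(t+S)) → 0` for
some `T, S ≥ 0`. -/
def StronglyAsymptotic {X : Type*} [MetricSpace X] (γ σ : ℝ → X) : Prop :=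
  ∃ T S : ℝ, 0 ≤ T ∧ 0 ≤ S ∧
    Tendsto (fun t => dist (γ (t + T)) (σ (t + S))) atTop (nhds 0)

/-- Two geodesic rays are asymptotic if `sup_{t ≥ 0} d(γ t, σ t) < ∞`. -/
def AsymptoticRays {X : Type*} [MetricSpace X] (γ σ : ℝ → X) : Prop :=
  ∃ M : ℝ, ∀ t : ℝ, 0 ≤ t → dist (γ t) (σ t) ≤ M

/-- A space has approaching geodesics if asymptotic geodesic rays are strongly
asymptotic. -/
def ApproachingGeodesics (X : Type*) [MetricSpace X] : Prop :=
  ∀ γ σ : ℝ → X, IsGeodesicRay γ → IsGeodesicRay σ →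
    AsymptoticRays γ σ → StronglyAsymptotic γ σ

/-- The geodesic region of radius `R` around the ray `γ`. -/
def geodesicRegion {X : Type*} [MetricSpace X] (γ : ℝ → X) (R : ℝ) : Set X :=
  {x | ∃ t : ℝ, 0 ≤ t ∧ dist x (γ t) < R}

/-!
Since `f` is `1`-Lipschitz, `k ↦ d(y, f^k y)` is subadditive and the divergence rate is `c` at
every base point `y`, so `c k ≤ d(y, f^k y) ≤ k d(x, f x)`: the orbit is a discrete
quasi-geodesic. In a hyperbolic geodesic space such a sequence stays uniformly close to each
geodesic `[x, f^m x]` (stability of quasi-geodesics, via the estimate `(y₀|y_k)_p ≥ min_i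
(y_i|y_{i+1})_p - δ ⌈log₂ k⌉` for chains), and by properness these geodesics subconverge to a
geodesic ray, which then stays at bounded distance from the whole orbit.
-/

open Set

section NonExpanding

variable {X : Type*} [PseudoMetricSpace X] {f : X → X}

lemma LipschitzWith.dist_iterate_le (hf : LipschitzWith 1 f) (n : ℕ) (a b : X) :
    dist (f^[n] a) (f^[n] b) ≤ dist a b := by
  simpa using (hf.iterate n).dist_le_mul a b

lemma LipschitzWith.dist_iterate_le_mul (hf : LipschitzWith 1 f) (x : X) (n : ℕ) :
    dist x (f^[n] x) ≤ n * dist x (f x) := by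
  induction n with
  | zero => simp
  | succ n ih =>
    calc dist x (f^[n + 1] x) ≤ dist x (f^[n] x) + dist (f^[n] x) (f^[n] (f x)) := by
          rw [Function.iterate_succ_apply]; exact dist_triangle _ _ _
      _ ≤ n * dist x (f x) + dist x (f x) := add_le_add ih (hf.dist_iterate_le n x (f x))
      _ = (n + 1 : ℕ) * dist x (f x) := by push_cast; ring

lemma LipschitzWith.tendsto_dist_iterate_div (hf : LipschitzWith 1 f) {x : X} {c : ℝ}
    (hx : Tendsto (fun n : ℕ => dist x (f^[n] x) / n) atTop (𝓝 c)) (y : X) :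
    Tendsto (fun n : ℕ => dist y (f^[n] y) / n) atTop (𝓝 c) := by
  have hdiff : Tendsto (fun n : ℕ => (dist y (f^[n] y) - dist x (f^[n] x)) / n) atTop (𝓝 0) := by
    refine squeeze_zero_norm (fun n => ?_) (tendsto_const_div_atTop_nhds_zero_nat (2 * dist x y))
    rw [Real.norm_eq_abs, abs_div, Nat.abs_cast]
    gcongr
    calc |dist y (f^[n] y) - dist x (f^[n] x)| ≤ dist y x + dist (f^[n] y) (f^[n] x) :=
          dist_dist_dist_le _ _ _ _
      _ ≤ 2 * dist x y := by linarith [hf.dist_iterate_le n y x, dist_comm x y]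
  simpa using (hx.add hdiff).congr fun n => by ring

/-- Subadditivity of `k ↦ d(y, f^k y)` gives `d(y, f^(kj) y)/(kj) ≤ d(y, f^k y)/k`, and the
left-hand side tends to `c`. -/
lemma LipschitzWith.mul_le_dist_iterate (hf : LipschitzWith 1 f) {y : X} {c : ℝ}
    (hy : Tendsto (fun n : ℕ => dist y (f^[n] y) / n) atTop (𝓝 c)) (k : ℕ) :
    c * k ≤ dist y (f^[k] y) := by
  rcases k.eq_zero_or_pos with rfl | hk
  · simp
  have hk' : (0 : ℝ) < k := by exact_mod_cast hk
  have hsub := hy.comp (tendsto_id.const_mul_atTop' hk)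
  have hle : ∀ j : ℕ, dist y (f^[k * j] y) / (k * j : ℕ) ≤ dist y (f^[k] y) / k := by
    intro j
    rcases j.eq_zero_or_pos with rfl | hj
    · simp only [mul_zero, Function.iterate_zero, id_eq, dist_self, zero_div]
      positivity
    rw [Function.iterate_mul, div_le_div_iff₀ (by positivity) hk']
    have hfk : LipschitzWith 1 f^[k] := by simpa using hf.iterate k
    calc dist y ((f^[k])^[j] y) * k ≤ j * dist y (f^[k] y) * k := by
          gcongr; exact hfk.dist_iterate_le_mul y j
      _ = dist y (f^[k] y) * (k * j : ℕ) := by push_cast; ring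
  exact (le_div_iff₀ hk').1 (le_of_tendsto' hsub hle)

end NonExpanding

def IsDiscreteQuasiGeodesic {X : Type*} [PseudoMetricSpace X] (c D : ℝ) (z : ℕ → X) : Prop :=
  ∀ n m : ℕ, c * |(n : ℝ) - m| ≤ dist (z n) (z m) ∧ dist (z n) (z m) ≤ D * |(n : ℝ) - m|

namespace IsDiscreteQuasiGeodesic

variable {X : Type*} [PseudoMetricSpace X] {c D : ℝ} {z : ℕ → X}

lemma of_forall_add
    (h : ∀ n k : ℕ, c * k ≤ dist (z n) (z (n + k)) ∧ dist (z n) (z (n + k)) ≤ D * k) :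
    IsDiscreteQuasiGeodesic c D z := by
  intro n m
  wlog hnm : n ≤ m generalizing n m
  · rw [dist_comm, abs_sub_comm]
    exact this m n (le_of_not_ge hnm)
  obtain ⟨k, rfl⟩ := Nat.exists_eq_add_of_le hnm
  have hk : |(n : ℝ) - (n + k : ℕ)| = k := by push_cast; simp
  rw [hk]
  exact h n k

lemma mul_sub_le_dist (hz : IsDiscreteQuasiGeodesic c D z) {n m : ℕ} (h : n ≤ m) :
    c * (m - n) ≤ dist (z n) (z m) := by
  have := (hz n m).1
  rwa [abs_sub_comm, abs_of_nonneg (sub_nonneg.2 (Nat.cast_le.2 h))] at this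

lemma dist_le_mul_sub (hz : IsDiscreteQuasiGeodesic c D z) {n m : ℕ} (h : n ≤ m) :
    dist (z n) (z m) ≤ D * (m - n) := by
  have := (hz n m).2
  rwa [abs_sub_comm, abs_of_nonneg (sub_nonneg.2 (Nat.cast_le.2 h))] at this

lemma dist_succ_le (hz : IsDiscreteQuasiGeodesic c D z) (n : ℕ) : dist (z n) (z (n + 1)) ≤ D := by
  simpa using hz.dist_le_mul_sub n.le_succ

lemma lower_le_upper (hz : IsDiscreteQuasiGeodesic c D z) : c ≤ D := by
  simpa using (hz.mul_sub_le_dist zero_le_one).trans (hz.dist_le_mul_sub zero_le_one)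

lemma tendsto_dist_atTop (hz : IsDiscreteQuasiGeodesic c D z) (hc : 0 < c) :
    Tendsto (fun m => dist (z 0) (z m)) atTop atTop :=
  tendsto_atTop_mono (fun m => by simpa using hz.mul_sub_le_dist m.zero_le)
    (tendsto_natCast_atTop_atTop.const_mul_atTop hc)

end IsDiscreteQuasiGeodesic

theorem LipschitzWith.isDiscreteQuasiGeodesic_iterate {X : Type*} [PseudoMetricSpace X]
    {f : X → X} (hf : LipschitzWith 1 f) {x : X} {c : ℝ}
    (hx : Tendsto (fun n : ℕ => dist x (f^[n] x) / n) atTop (𝓝 c)) :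
    IsDiscreteQuasiGeodesic c (dist x (f x)) (fun n => f^[n] x) := by
  refine .of_forall_add fun n k => ?_
  rw [add_comm, Function.iterate_add_apply]
  refine ⟨hf.mul_le_dist_iterate (hf.tendsto_dist_iterate_div hx _) k, ?_⟩
  calc dist (f^[n] x) (f^[k] (f^[n] x)) ≤ k * dist (f^[n] x) (f (f^[n] x)) :=
        hf.dist_iterate_le_mul _ k
    _ ≤ k * dist x (f x) := by
        gcongr
        rw [← Function.iterate_succ_apply' f, Function.iterate_succ_apply]
        exact hf.dist_iterate_le n x (f x)
    _ = dist x (f x) * k := mul_comm _ _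

lemma add_three_sq_le_sixteen_mul_two_pow (n : ℕ) : (n + 3) ^ 2 ≤ 16 * 2 ^ n := by
  induction n with
  | zero => norm_num
  | succ n ih =>
    nlinarith [@Nat.lt_two_pow_self n, pow_succ 2 n]

/-- A quantity bounded by a logarithm of itself is bounded. -/
lemma le_max_of_forall_two_pow_le {c D δ r : ℝ} (hc : 0 < c) (hcD : c ≤ D)
    (h : ∀ N : ℕ, 8 * r / c ≤ 2 ^ N → r ≤ D / 2 + (N + 2) * δ) :
    r ≤ max D (512 * δ ^ 2 / c) := by
  by_contra! hr
  obtain ⟨hDr, hδr⟩ := max_lt_iff.1 hr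
  have hr0 : 0 < r := (hc.trans_le hcD).trans hDr
  obtain ⟨n, hn, hn'⟩ := exists_nat_pow_near (x := 8 * r / c) (y := (2 : ℝ))
    (by rw [le_div_iff₀ hc]; linarith) one_lt_two
  have h₁ : r ≤ 2 * (n + 3) * δ := by
    have := h (n + 1) hn'.le
    push_cast at this
    linarith
  have h₂ : ((n : ℝ) + 3) ^ 2 ≤ 16 * 2 ^ n := by
    exact_mod_cast add_three_sq_le_sixteen_mul_two_pow n
  have : r * r ≤ 512 * δ ^ 2 / c * r :=
    calc r * r ≤ (2 * (n + 3) * δ) ^ 2 := by nlinarith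
      _ = 4 * δ ^ 2 * (n + 3) ^ 2 := by ring
      _ ≤ 4 * δ ^ 2 * (16 * (8 * r / c)) := by gcongr; linarith
      _ = 512 * δ ^ 2 / c * r := by ring
  exact hδr.not_ge (le_of_mul_le_mul_right this hr0)

section Hyperbolic

variable {X : Type*} [MetricSpace X]

lemma gromovProduct_comm (p x y : X) : gromovProduct p x y = gromovProduct p y x := by
  unfold gromovProduct; rw [dist_comm x y]; ring

lemma gromovProduct_self (p x : X) : gromovProduct p x x = dist x p := by
  unfold gromovProduct; simp

lemma gromovProduct_eq_zero_of_dist_add_dist_eq {p x y : X}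
    (h : dist x p + dist p y = dist x y) : gromovProduct p x y = 0 := by
  unfold gromovProduct; rw [dist_comm y p]; linarith

def IsGeodesicSegment (γ : ℝ → X) (L : ℝ) : Prop :=
  ∀ s ∈ Icc (0 : ℝ) L, ∀ t ∈ Icc (0 : ℝ) L, dist (γ s) (γ t) = |s - t|

lemma IsGeodesicSpace.exists_isGeodesicSegment (hX : IsGeodesicSpace X) (x y : X) :
    ∃ γ : ℝ → X, γ 0 = x ∧ γ (dist x y) = y ∧ IsGeodesicSegment γ (dist x y) :=
  hX x y

namespace IsGeodesicSegment

variable {γ : ℝ → X} {L : ℝ}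

lemma continuousOn (hγ : IsGeodesicSegment γ L) : ContinuousOn γ (Icc 0 L) :=
  Metric.continuousOn_iff.2 fun b hb ε hε =>
    ⟨ε, hε, fun a ha hab => by rwa [hγ a ha b hb, ← Real.dist_eq]⟩

lemma dist_zero (hγ : IsGeodesicSegment γ L) {t : ℝ} (ht : t ∈ Icc 0 L) :
    dist (γ 0) (γ t) = t := by
  rw [hγ 0 ⟨le_rfl, ht.1.trans ht.2⟩ t ht, zero_sub, abs_neg, abs_of_nonneg ht.1]

end IsGeodesicSegment

variable {δ : ℝ}

lemma IsDeltaHyperbolic.nonneg (hhyp : IsDeltaHyperbolic X δ) (p : X) : 0 ≤ δ := by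
  simpa [gromovProduct] using hhyp p p p p

lemma IsDeltaHyperbolic.le_gromovProduct_of_chain (hhyp : IsDeltaHyperbolic X δ) (p : X)
    {μ : ℝ} (N : ℕ) {k : ℕ} (hk : 1 ≤ k) (hkN : k ≤ 2 ^ N) (y : ℕ → X)
    (hy : ∀ i < k, μ ≤ gromovProduct p (y i) (y (i + 1))) :
    μ - N * δ ≤ gromovProduct p (y 0) (y k) := by
  have hδ := hhyp.nonneg p
  induction N generalizing k y with
  | zero =>
    obtain rfl : k = 1 := by simp at hkN; omega
    simpa using hy 0 one_pos
  | succ N ih =>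
    by_cases hk' : k ≤ 2 ^ N
    · push_cast; linarith [ih hk hk' y hy]
    have hA := ih Nat.one_le_two_pow le_rfl y fun i hi => hy i (by omega)
    have hB := ih (k := k - 2 ^ N) (by omega) (by rw [pow_succ] at hkN; omega)
      (fun i => y (2 ^ N + i)) fun i hi => hy (2 ^ N + i) (by omega)
    rw [add_zero, Nat.add_sub_cancel' (by omega)] at hB
    have := hhyp p (y 0) (y k) (y (2 ^ N))
    push_cast
    linarith [le_min hA hB]

lemma IsDeltaHyperbolic.le_gromovProduct_of_far_chain (hhyp : IsDeltaHyperbolic X δ)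
    {w : X} {r D : ℝ} (hD : 0 ≤ D) {N k : ℕ} (hkN : k ≤ 2 ^ N) (y : ℕ → X)
    (hstep : ∀ i < k, dist (y i) (y (i + 1)) ≤ D) (hfar : ∀ i ≤ k, r ≤ dist w (y i)) :
    r - D / 2 - N * δ ≤ gromovProduct w (y 0) (y k) := by
  rcases k.eq_zero_or_pos with rfl | hk
  · have := hhyp.nonneg w
    rw [gromovProduct_self, dist_comm]
    linarith [hfar 0 le_rfl, show (0 : ℝ) ≤ N * δ by positivity]
  refine hhyp.le_gromovProduct_of_chain w N hk hkN y fun i hi => ?_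
  unfold gromovProduct
  rw [dist_comm (y i) w, dist_comm (y (i + 1)) w]
  linarith [hstep i hi, hfar i hi.le, hfar (i + 1) hi]

lemma IsDeltaHyperbolic.le_gromovProduct_of_far_orbit (hhyp : IsDeltaHyperbolic X δ)
    {z : ℕ → X} {w : X} {r D : ℝ} (hD : 0 ≤ D) (hstep : ∀ u, dist (z u) (z (u + 1)) ≤ D)
    {s j N : ℕ} (hsj : s ≤ j) (hN : j - s ≤ 2 ^ N) (hfar : ∀ u ∈ Icc s j, r ≤ dist w (z u)) :
    r - D / 2 - N * δ ≤ gromovProduct w (z s) (z j) := by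
  have := hhyp.le_gromovProduct_of_far_chain hD hN (fun i => z (s + i))
    (fun i _ => hstep (s + i)) fun i hi => hfar (s + i) ⟨by omega, by omega⟩
  rwa [add_zero, Nat.add_sub_cancel' hsj] at this

lemma IsDeltaHyperbolic.le_gromovProduct_of_far_segment (hhyp : IsDeltaHyperbolic X δ)
    (hX : IsGeodesicSpace X) {w P Q : X} {r D : ℝ} {N : ℕ} (hD : 0 < D)
    (hfar : r + dist P Q ≤ dist w P) (hN : dist P Q ≤ 2 ^ N * D) :
    r - D / 2 - N * δ ≤ gromovProduct w P Q := by
  obtain ⟨γ, hγ0, hγL, hγ⟩ := hX.exists_isGeodesicSegment P Q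
  set L := dist P Q
  have hmem : ∀ i : ℕ, min (i * D) L ∈ Icc 0 L :=
    fun i => ⟨le_min (by positivity) dist_nonneg, min_le_right _ _⟩
  have hkN : ⌈L / D⌉₊ ≤ 2 ^ N := Nat.ceil_le.2 (by push_cast; rwa [div_le_iff₀ hD])
  have hkL : L ≤ ⌈L / D⌉₊ * D := (div_le_iff₀ hD).1 (Nat.le_ceil _)
  have := hhyp.le_gromovProduct_of_far_chain (w := w) (r := r) hD.le hkN
    (fun i => γ (min (i * D) L))
    (fun i _ => by
      rw [hγ _ (hmem i) _ (hmem (i + 1))]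
      calc _ ≤ max |i * D - (i + 1 : ℕ) * D| |L - L| := abs_min_sub_min_le_max _ _ _ _
        _ = D := by
          rw [sub_self, abs_zero, Nat.cast_succ, show (i : ℝ) * D - (i + 1) * D = -D by ring,
            abs_neg, abs_of_pos hD, max_eq_left hD.le])
    (fun i _ => by
      have h₁ := dist_triangle w (γ (min (i * D) L)) P
      have h₂ := hγ.dist_zero (hmem i)
      rw [hγ0, dist_comm] at h₂
      linarith [min_le_right (i * D) L])
  rwa [Nat.cast_zero, zero_mul, min_eq_left (dist_nonneg : 0 ≤ L), hγ0, min_eq_right hkL, hγL]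
    at this

lemma IsDeltaHyperbolic.le_gromovProduct_of_detour (hhyp : IsDeltaHyperbolic X δ)
    (hX : IsGeodesicSpace X) {z : ℕ → X} {D : ℝ} (hD : 0 < D)
    (hstep : ∀ u, dist (z u) (z (u + 1)) ≤ D) {w p q : X} {r : ℝ} {s j N : ℕ}
    (hfar : ∀ u ∈ uIcc s j, r ≤ dist w (z u))
    (hp : r + dist p (z s) ≤ dist w p) (hq : r + dist q (z j) ≤ dist w q)
    (hpN : dist p (z s) ≤ 2 ^ N * D) (hqN : dist q (z j) ≤ 2 ^ N * D)
    (hsj : |(s : ℝ) - j| ≤ 2 ^ N) :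
    r - D / 2 - (N + 2) * δ ≤ gromovProduct w p q := by
  have hδ := hhyp.nonneg w
  have hps := hhyp.le_gromovProduct_of_far_segment hX hD hp hpN
  have hqj := hhyp.le_gromovProduct_of_far_segment hX hD hq hqN
  rw [gromovProduct_comm] at hqj
  have horbit : r - D / 2 - N * δ ≤ gromovProduct w (z s) (z j) := by
    rcases le_total s j with h | h
    · refine hhyp.le_gromovProduct_of_far_orbit hD.le hstep h ?_
        fun u hu => hfar u (Icc_subset_uIcc hu)
      rw [← Nat.cast_le (α := ℝ), Nat.cast_sub h]; push_cast; linarith [abs_le.1 hsj]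
    · rw [gromovProduct_comm]
      refine hhyp.le_gromovProduct_of_far_orbit hD.le hstep h ?_
        fun u hu => hfar u (Icc_subset_uIcc' hu)
      rw [← Nat.cast_le (α := ℝ), Nat.cast_sub h]; push_cast; linarith [abs_le.1 hsj]
  have h₁ := hhyp w p (z j) (z s)
  have h₂ := hhyp w p q (z j)
  have hpj : r - D / 2 - N * δ - δ ≤ gromovProduct w p (z j) := by linarith [le_min hps horbit]
  linarith [le_min hpj (show r - D / 2 - N * δ - δ ≤ gromovProduct w (z j) q by linarith)]

lemma IsCompact.exists_mem_dist_le_of_infDist_le {S : Set X} (hS : IsCompact S) (hne : S.Nonempty)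
    {w v : X} {r : ℝ} (hv : infDist v S ≤ r) (hfar : ∀ y ∈ S, r ≤ dist w y)
    (h : 2 * r ≤ dist w v ∨ v ∈ S) : ∃ y ∈ S, dist v y ≤ r ∧ r + dist v y ≤ dist w v := by
  rcases h with h | h
  · obtain ⟨y, hy, hvy⟩ := hS.exists_infDist_eq_dist hne v
    exact ⟨y, hy, hvy ▸ hv, by linarith [hvy ▸ hv]⟩
  · exact ⟨v, h, by simpa using infDist_nonneg.trans hv, by simpa using hfar v h⟩

variable {c D : ℝ} {z : ℕ → X}

lemma IsDeltaHyperbolic.le_max_of_detour (hhyp : IsDeltaHyperbolic X δ) (hX : IsGeodesicSpace X)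
    (hz : IsDiscreteQuasiGeodesic c D z) (hc : 0 < c) {w p q : X} {r : ℝ} {m s j : ℕ}
    (hs : s ≤ m) (hj : j ≤ m) (hfar : ∀ u ≤ m, r ≤ dist w (z u))
    (hpq : gromovProduct w p q = 0) (hpq' : dist p q ≤ 4 * r)
    (hpr : dist p (z s) ≤ r) (hp : r + dist p (z s) ≤ dist w p)
    (hqr : dist q (z j) ≤ r) (hq : r + dist q (z j) ≤ dist w q) :
    r ≤ max D (512 * δ ^ 2 / c) := by
  have hr : 0 ≤ r := dist_nonneg.trans hpr
  have hD : 0 < D := hc.trans_le hz.lower_le_upper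
  refine le_max_of_forall_two_pow_le hc hz.lower_le_upper fun N hN => ?_
  have hsj : |(s : ℝ) - j| ≤ 2 ^ N := by
    have := (hz s j).1.trans (dist_triangle4 (z s) p q (z j))
    rw [dist_comm] at this
    refine le_trans ?_ hN
    rw [le_div_iff₀ hc]
    nlinarith [abs_nonneg ((s : ℝ) - j)]
  have hrN : r ≤ 2 ^ N * D := by
    have : r ≤ 8 * r / c * D := by
      rw [div_mul_eq_mul_div, le_div_iff₀ hc]
      nlinarith [mul_le_mul_of_nonneg_left hz.lower_le_upper hr]
    exact this.trans (mul_le_mul_of_nonneg_right hN hD.le)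
  have := hhyp.le_gromovProduct_of_detour hX hD hz.dist_succ_le
    (fun u hu => hfar u (by rcases mem_uIcc.1 hu with h | h <;> omega))
    hp hq (hpr.trans hrN) (hqr.trans hrN) hsj
  rw [hpq] at this
  linarith

/-- If `γ t₀` is a point of the geodesic `[z 0, z m]` farthest from `z 0, …, z m`, at distance
`r`, the geodesic near `γ t₀` can be bypassed through the chain at distance `≥ r` from `γ t₀`
by a detour of length `O(r)`; hyperbolicity then forces `r = O(δ log r)`. -/
lemma IsDeltaHyperbolic.infDist_le_of_isMaxOn (hhyp : IsDeltaHyperbolic X δ)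
    (hX : IsGeodesicSpace X) (hz : IsDiscreteQuasiGeodesic c D z) (hc : 0 < c) {m : ℕ}
    {γ : ℝ → X} {L : ℝ} (hγ : IsGeodesicSegment γ L) (hγ0 : γ 0 = z 0) (hγL : γ L = z m)
    {t₀ : ℝ} (ht₀ : t₀ ∈ Icc 0 L)
    (hmax : IsMaxOn (fun t => infDist (γ t) (z '' Iic m)) (Icc 0 L) t₀) :
    infDist (γ t₀) (z '' Iic m) ≤ max D (512 * δ ^ 2 / c) := by
  set S := z '' Iic m
  set r := infDist (γ t₀) S
  have hS : IsCompact S := ((finite_Iic m).image z).isCompact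
  have hfar : ∀ y ∈ S, r ≤ dist (γ t₀) y := fun y hy => infDist_le_dist_of_mem hy
  have hend : ∀ a ∈ Icc 0 L, (2 * r ≤ |t₀ - a| ∨ γ a ∈ S) →
      ∃ s ≤ m, dist (γ a) (z s) ≤ r ∧ r + dist (γ a) (z s) ≤ dist (γ t₀) (γ a) := by
    intro a ha h
    obtain ⟨_, ⟨s, hs, rfl⟩, hsr, hs'⟩ := hS.exists_mem_dist_le_of_infDist_le
      ⟨z 0, mem_image_of_mem z (Nat.zero_le m)⟩ (hmax ha) hfar (by rwa [hγ t₀ ht₀ a ha])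
    exact ⟨s, hs, hsr, hs'⟩
  have hr : 0 ≤ r := infDist_nonneg
  set a := max (t₀ - 2 * r) 0
  set b := min (t₀ + 2 * r) L
  have ha : a ∈ Icc 0 L := ⟨le_max_right _ _, max_le (by linarith [ht₀.2]) (ht₀.1.trans ht₀.2)⟩
  have hb : b ∈ Icc 0 L := ⟨le_min (by linarith [ht₀.1]) (ht₀.1.trans ht₀.2), min_le_right _ _⟩
  have hat₀ : a ≤ t₀ := max_le (by linarith) ht₀.1
  have ht₀b : t₀ ≤ b := le_min (by linarith) ht₀.2
  obtain ⟨s, hs, hsr, hps⟩ := hend a ha (by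
    rcases le_total 0 (t₀ - 2 * r) with h | h
    · left
      rw [show a = t₀ - 2 * r from max_eq_left h, sub_sub_cancel, abs_of_nonneg (by positivity)]
    · right
      rw [show a = 0 from max_eq_right h, hγ0]
      exact mem_image_of_mem z (Nat.zero_le m))
  obtain ⟨j, hj, hjr, hqj⟩ := hend b hb (by
    rcases le_total (t₀ + 2 * r) L with h | h
    · left
      rw [show b = t₀ + 2 * r from min_eq_left h, sub_add_cancel_left, abs_neg,
        abs_of_nonneg (by positivity)]
    · right
      rw [show b = L from min_eq_right h, hγL]
      exact mem_image_of_mem z (le_refl m))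
  refine hhyp.le_max_of_detour hX hz hc hs hj (fun u hu => hfar _ (mem_image_of_mem z hu))
    (gromovProduct_eq_zero_of_dist_add_dist_eq ?_) ?_ hsr hps hjr hqj
  · rw [hγ a ha t₀ ht₀, hγ t₀ ht₀ b hb, hγ a ha b hb, abs_of_nonpos (by linarith),
      abs_of_nonpos (by linarith), abs_of_nonpos (by linarith)]
    ring
  · rw [hγ a ha b hb, abs_of_nonpos (by linarith)]
    linarith [le_max_left (t₀ - 2 * r) 0, min_le_left (t₀ + 2 * r) L]

lemma IsDeltaHyperbolic.exists_dist_le_of_isGeodesicSegment (hhyp : IsDeltaHyperbolic X δ)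
    (hX : IsGeodesicSpace X) (hz : IsDiscreteQuasiGeodesic c D z) (hc : 0 < c) {m : ℕ}
    {γ : ℝ → X} {L : ℝ} (hγ : IsGeodesicSegment γ L) (hγ0 : γ 0 = z 0) (hγL : γ L = z m)
    {t : ℝ} (ht : t ∈ Icc 0 L) : ∃ u ≤ m, dist (γ t) (z u) ≤ max D (512 * δ ^ 2 / c) := by
  have hS : IsCompact (z '' Iic m) := ((finite_Iic m).image z).isCompact
  obtain ⟨t₀, ht₀, hmax⟩ := isCompact_Icc.exists_isMaxOn ⟨t, ht⟩
    ((continuous_infDist_pt _).comp_continuousOn hγ.continuousOn)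
  obtain ⟨_, ⟨u, hu, rfl⟩, hdist⟩ :=
    hS.exists_infDist_eq_dist ⟨z 0, mem_image_of_mem z (Nat.zero_le m)⟩ (γ t)
  exact ⟨u, hu, hdist ▸ (hmax ht).trans (hhyp.infDist_le_of_isMaxOn hX hz hc hγ hγ0 hγL ht₀ hmax)⟩

/-- By connectedness some point of `γ` is `R`-close both to some `z u` with `u ≤ n` and to some
`z v` with `v ≥ n`; the lower bound of `z` then makes `u` and `v` close to `n`. -/
lemma IsDiscreteQuasiGeodesic.exists_dist_le_of_forall_near (hz : IsDiscreteQuasiGeodesic c D z)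
    (hc : 0 < c) {γ : ℝ → X} {L R : ℝ} {m n : ℕ} (hγ : ContinuousOn γ (Icc 0 L)) (hL : 0 ≤ L)
    (hγ0 : γ 0 = z 0) (hγL : γ L = z m) (hnear : ∀ t ∈ Icc 0 L, ∃ u ≤ m, dist (γ t) (z u) ≤ R)
    (hn : n ≤ m) : ∃ t ∈ Icc 0 L, dist (z n) (γ t) ≤ R * (2 * D / c + 1) := by
  have hR : 0 ≤ R := by
    obtain ⟨u, -, hu⟩ := hnear 0 ⟨le_rfl, hL⟩
    exact dist_nonneg.trans hu
  have hA : IsClosed (⋃ u ∈ Iic n, closedBall (z u) R) :=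
    (finite_Iic n).isClosed_biUnion fun _ _ => isClosed_closedBall
  have hB : IsClosed (⋃ v ∈ Icc n m, closedBall (z v) R) :=
    (finite_Icc n m).isClosed_biUnion fun _ _ => isClosed_closedBall
  obtain ⟨t, ht, ⟨-, htA⟩, -, htB⟩ := isPreconnected_closed_iff.1 isPreconnected_Icc _ _
    (hγ.preimage_isClosed_of_isClosed isClosed_Icc hA)
    (hγ.preimage_isClosed_of_isClosed isClosed_Icc hB)
    (fun t ht => by
      obtain ⟨u, hum, hu⟩ := hnear t ht
      rcases le_total u n with h | h
      · exact Or.inl ⟨ht, mem_biUnion h (mem_closedBall.2 hu)⟩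
      · exact Or.inr ⟨ht, mem_biUnion ⟨h, hum⟩ (mem_closedBall.2 hu)⟩)
    ⟨0, ⟨le_rfl, hL⟩, ⟨le_rfl, hL⟩, mem_biUnion (Nat.zero_le n) (by simp [hγ0, hR])⟩
    ⟨L, ⟨hL, le_rfl⟩, ⟨hL, le_rfl⟩, mem_biUnion ⟨hn, le_rfl⟩ (by simp [hγL, hR])⟩
  obtain ⟨u, hun : u ≤ n, hu⟩ := mem_iUnion₂.1 htA
  obtain ⟨v, ⟨hnv, -⟩, hv⟩ := mem_iUnion₂.1 htB
  rw [mem_closedBall] at hu hv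
  have huv : c * ((v : ℝ) - u) ≤ 2 * R :=
    (hz.mul_sub_le_dist (hun.trans hnv)).trans (by linarith [dist_triangle_left (z u) (z v) (γ t)])
  have hnu : (n : ℝ) - u ≤ 2 * R / c := by
    have : (n : ℝ) ≤ v := by exact_mod_cast hnv
    rw [le_div_iff₀ hc]
    nlinarith
  refine ⟨t, ht, ?_⟩
  calc dist (z n) (γ t) ≤ dist (z u) (z n) + dist (z u) (γ t) := dist_triangle_left _ _ _
    _ ≤ D * (n - u) + R := add_le_add (hz.dist_le_mul_sub hun) (by rwa [dist_comm])
    _ ≤ D * (2 * R / c) + R := by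
        gcongr
        exact hc.le.trans hz.lower_le_upper
    _ = R * (2 * D / c + 1) := by ring

/-- Stability of quasi-geodesics (Morse lemma), discrete version. -/
theorem IsDeltaHyperbolic.exists_dist_le_of_isDiscreteQuasiGeodesic
    (hhyp : IsDeltaHyperbolic X δ) (hX : IsGeodesicSpace X) (hz : IsDiscreteQuasiGeodesic c D z)
    (hc : 0 < c) {m n : ℕ} (hn : n ≤ m) {γ : ℝ → X} {L : ℝ} (hL : 0 ≤ L)
    (hγ : IsGeodesicSegment γ L) (hγ0 : γ 0 = z 0) (hγL : γ L = z m) :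
    ∃ t ∈ Icc 0 L, dist (z n) (γ t) ≤ max D (512 * δ ^ 2 / c) * (2 * D / c + 1) :=
  hz.exists_dist_le_of_forall_near hc hγ.continuousOn hL hγ0 hγL
    (fun _ ht => hhyp.exists_dist_le_of_isGeodesicSegment hX hz hc hγ hγ0 hγL ht) hn

end Hyperbolic

lemma exists_mapClusterPt_of_dist_le {X : Type*} [MetricSpace X] [ProperSpace X] {ι : Type*}
    {x : X} {g : ℕ → ℝ → X} (hg : ∀ m t, dist (g m t) x ≤ |t|) {T : ι → ℝ} {τ : ι → ℕ → ℝ}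
    (hτ : ∀ i m, τ i m ∈ Icc 0 (T i)) :
    ∃ σ : ℝ → X, ∃ τ' : ι → ℝ, (∀ i, τ' i ∈ Icc 0 (T i)) ∧
      MapClusterPt (σ, τ') atTop fun m => (g m, fun i => τ i m) := by
  obtain ⟨⟨σ, τ'⟩, ⟨-, hτ'⟩, hclus⟩ :=
    ((isCompact_univ_pi fun t => isCompact_closedBall x |t|).prod
      (isCompact_univ_pi fun i => isCompact_Icc)).exists_mapClusterPt (f := atTop)
      (u := fun m => (g m, fun i => τ i m))
      (tendsto_principal.2 (.of_forall fun m => ⟨fun t _ => hg m t, fun i _ => hτ i m⟩))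
  exact ⟨σ, τ', fun i => hτ' i (mem_univ i), hclus⟩

/-- The ray is a pointwise cluster value of the segments, extended by `x` outside `[0, L m]`. -/
theorem exists_isGeodesicRay_of_isGeodesicSegment {X : Type*} [MetricSpace X] [ProperSpace X]
    {ι : Type*} {x : X} {Γ : ℕ → ℝ → X} {L : ℕ → ℝ} (hΓ0 : ∀ m, Γ m 0 = x)
    (hΓ : ∀ m, IsGeodesicSegment (Γ m) (L m)) (hL : Tendsto L atTop atTop) {z : ι → X} {R : ℝ}
    (hnear : ∀ i, ∀ᶠ m in atTop, ∃ t ∈ Icc 0 (L m), dist (z i) (Γ m t) ≤ R) :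
    ∃ σ : ℝ → X, IsGeodesicRay σ ∧ ∀ i, ∃ t, 0 ≤ t ∧ dist (z i) (σ t) ≤ R := by
  have htime : ∀ i m, ∃ t ∈ Icc 0 (dist x (z i) + |R|),
      (∃ t' ∈ Icc 0 (L m), dist (z i) (Γ m t') ≤ R) →
        t ∈ Icc 0 (L m) ∧ dist (z i) (Γ m t) ≤ R := by
    intro i m
    by_cases h : ∃ t' ∈ Icc 0 (L m), dist (z i) (Γ m t') ≤ R
    · obtain ⟨t', ht', hd⟩ := h
      have := dist_triangle x (z i) (Γ m t')
      rw [← hΓ0 m, (hΓ m).dist_zero ht', hΓ0 m] at this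
      exact ⟨t', ⟨ht'.1, by linarith [le_abs_self R]⟩, fun _ => ⟨ht', hd⟩⟩
    · exact ⟨0, ⟨le_rfl, by positivity⟩, fun h' => (h h').elim⟩
  choose τ hτK hτ using htime
  let g : ℕ → ℝ → X := fun m t => if t ∈ Icc 0 (L m) then Γ m t else x
  obtain ⟨σ, τ', hτ', hclus⟩ := exists_mapClusterPt_of_dist_le (x := x) (g := g) (fun m t => by
    simp only [g]
    split_ifs with ht
    · rw [← hΓ0 m, dist_comm, (hΓ m).dist_zero ht, abs_of_nonneg ht.1]
    · simp) hτK
  have hnhds₁ : ∀ t ε, 0 < ε → ∀ᶠ p : (ℝ → X) × (ι → ℝ) in 𝓝 (σ, τ'), dist (p.1 t) (σ t) < ε :=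
    fun t => Metric.tendsto_nhds.1 (((continuous_apply t).comp continuous_fst).tendsto _)
  have hnhds₂ : ∀ i ε, 0 < ε → ∀ᶠ p : (ℝ → X) × (ι → ℝ) in 𝓝 (σ, τ'), dist (p.2 i) (τ' i) < ε :=
    fun i => Metric.tendsto_nhds.1 (((continuous_apply i).comp continuous_snd).tendsto _)
  refine ⟨σ, fun s t hs ht => eq_of_forall_dist_le fun ε hε => ?_,
    fun i => ⟨τ' i, (hτ' i).1, le_of_forall_pos_le_add fun ε hε => ?_⟩⟩
  · obtain ⟨m, ⟨h₁, h₂⟩, hm⟩ := ((hclus.frequently ((hnhds₁ s (ε / 2) (by positivity)).and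
      (hnhds₁ t (ε / 2) (by positivity)))).and_eventually (hL.eventually_ge_atTop (max s t))).exists
    have hsm : s ∈ Icc 0 (L m) := ⟨hs, (le_max_left s t).trans hm⟩
    have htm : t ∈ Icc 0 (L m) := ⟨ht, (le_max_right s t).trans hm⟩
    simp only [g, if_pos hsm, if_pos htm] at h₁ h₂
    calc dist (dist (σ s) (σ t)) |s - t| = dist (dist (σ s) (σ t)) (dist (Γ m s) (Γ m t)) := by
          rw [hΓ m s hsm t htm]
      _ ≤ dist (σ s) (Γ m s) + dist (σ t) (Γ m t) := dist_dist_dist_le _ _ _ _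
      _ ≤ ε := by rw [dist_comm, dist_comm (σ t)]; linarith
  · obtain ⟨m, ⟨h₁, h₂⟩, hm, hτm⟩ := ((hclus.frequently ((hnhds₁ (τ' i) (ε / 2) (by positivity)).and
      (hnhds₂ i (ε / 2) (by positivity)))).and_eventually
      ((hL.eventually_ge_atTop (τ' i)).and ((hnear i).mono fun m => hτ i m))).exists
    have hτ'm : τ' i ∈ Icc 0 (L m) := ⟨(hτ' i).1, hm⟩
    simp only [g, if_pos hτ'm] at h₁ h₂
    calc dist (z i) (σ (τ' i)) ≤ dist (z i) (Γ m (τ i m)) + dist (Γ m (τ i m)) (Γ m (τ' i)) +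
          dist (Γ m (τ' i)) (σ (τ' i)) := dist_triangle4 _ _ _ _
      _ ≤ R + ε := by
          rw [hΓ m _ hτm.1 _ hτ'm, ← Real.dist_eq]
          linarith [hτm.2]

theorem forward_orbit_quasigeodesic_general {X : Type*} [MetricSpace X] [ProperSpace X]
    (hX : IsGeodesicSpace X)
    (δ : ℝ) (hhyp : IsDeltaHyperbolic X δ)
    (f : X → X) (hf : ∀ a b : X, dist (f a) (f b) ≤ dist a b)
    (x : X) (c : ℝ) (hc : 0 < c)
    (hrate : Tendsto (fun n : ℕ => dist x (f^[n] x) / n) atTop (nhds c)) :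
    (∀ n m : ℕ, c * |(n : ℝ) - (m : ℝ)| ≤ dist (f^[n] x) (f^[m] x) ∧
      dist (f^[n] x) (f^[m] x) ≤ dist x (f x) * |(n : ℝ) - (m : ℝ)|) ∧
    (∃ σ : ℝ → X, IsGeodesicRay σ ∧
      ∃ R > (0 : ℝ), ∀ n : ℕ, ∃ t : ℝ, 0 ≤ t ∧ dist (f^[n] x) (σ t) < R) := by
  have hq : IsDiscreteQuasiGeodesic c (dist x (f x)) (fun n => f^[n] x) :=
    (LipschitzWith.of_dist_le_mul fun a b => by simpa using hf a b).isDiscreteQuasiGeodesic_iterate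
      hrate
  refine ⟨hq, ?_⟩
  choose Γ hΓ0 hΓL hΓ using fun m => hX.exists_isGeodesicSegment x (f^[m] x)
  obtain ⟨σ, hσ, hnear⟩ := exists_isGeodesicRay_of_isGeodesicSegment hΓ0 hΓ
    (hq.tendsto_dist_atTop hc) fun n => (eventually_ge_atTop n).mono fun m hnm =>
      hhyp.exists_dist_le_of_isDiscreteQuasiGeodesic hX hq hc hnm dist_nonneg (hΓ m) (hΓ0 m) (hΓL m)
  refine ⟨σ, hσ, _, lt_of_le_of_lt ?_ (lt_add_one _), fun n => (hnear n).imp fun t ht =>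
    ⟨ht.1, ht.2.trans_lt (lt_add_one _)⟩⟩
  have hD : 0 ≤ dist x (f x) := dist_nonneg
  positivity

/-- if the divergence rate c of a non-expanding map f is positive,
then every forward orbit is a discrete quasi-geodesic ray and is contained in a
geodesic region around some geodesic ray. -/
theorem forward_orbit_quasigeodesic {X : Type*} [MetricSpace X] [ProperSpace X]
    (hX : IsGeodesicSpace X)
    (δ : ℝ) (hδ : 0 ≤ δ) (hhyp : IsDeltaHyperbolic X δ)
    (f : X → X) (hf : ∀ a b : X, dist (f a) (f b) ≤ dist a b)
    (x : X) (c : ℝ) (hc : 0 < c)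
    (hrate : Tendsto (fun n : ℕ => dist x (f^[n] x) / n) atTop (nhds c)) :
    (∀ n m : ℕ, c * |(n : ℝ) - (m : ℝ)| ≤ dist (f^[n] x) (f^[m] x) ∧
      dist (f^[n] x) (f^[m] x) ≤ dist x (f x) * |(n : ℝ) - (m : ℝ)|) ∧
    (∃ σ : ℝ → X, IsGeodesicRay σ ∧
      ∃ R > (0 : ℝ), ∀ n : ℕ, ∃ t : ℝ, 0 ≤ t ∧ dist (f^[n] x) (σ t) < R) :=
  forward_orbit_quasigeodesic_general hX δ hhyp f hf x c hc hrate
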